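/- Let G be a connected bipartite graph of order n = r + s ≥ 4 whose vertex set is partitioned into stable sets U and W with |U| = r ≤ s = |W|. If r ≥ 3 and λ(Ḡ) = λ(G) + 1, then 3r/2 ≤ s ≤ 2^r − 1 (i.e., 3r ≤ 2s and s ≤ 2^r − 1). -/

import Mathlib

/-!
Since the traces on `S` in `Gᶜ` of the vertices outside `S` are the complements in `S` of their
traces in `G`, a minimum LD-set `S` of `G` that is not an LD-set of `Gᶜ` has a vertex outside it
adjacent to all of `S`; in a bipartite graph this forces `S` to be a whole side. So when
`λ(Ḡ) = λ(G) + 1` the minimum LD-sets of `G` are among `U` and `W`; say `U` is one (the argument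
below applied to `W` would give `3s ≤ 2r`). The traces on `U` of the vertices of `W` are distinct
and nonempty, whence `s ≤ 2^r - 1`.

For `u ∈ U` and a neighbour `w`, the swap `(U \ {u}) ∪ {w}` is neither `U` nor `W`, so it is not an
LD-set. In the family `𝒯` of the traces together with `∅`, seen inside the hypercube on `U`, this
yields two edges of `𝒯` in direction `u`. Down-compressions keep `|𝒯|` and do not decrease the
number of edges in any direction, and once `𝒯` is closed under taking subsets the two edges in
direction `u` put `{u}` and some pair `{u, v}` in `𝒯`. Hence `|𝒯| ≥ 1 + r + r / 2`, that is
`3r ≤ 2s`.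
-/

open SimpleGraph

/-- `S` is a dominating set of `G`: every vertex outside `S` has a neighbor in `S`. -/
def isDomSet {α : Type*} (G : SimpleGraph α) (S : Set α) : Prop :=
  ∀ v ∉ S, ∃ u ∈ S, G.Adj v u

/-- `S` is a locating-dominating set (LD-set) of `G`. -/
def isLDSet {α : Type*} (G : SimpleGraph α) (S : Set α) : Prop :=
  isDomSet G S ∧ ∀ u ∉ S, ∀ v ∉ S, u ≠ v →
    G.neighborSet u ∩ S ≠ G.neighborSet v ∩ S

/-- The location-domination number `λ(G)`. -/
noncomputable def ldNum {α : Type*} (G : SimpleGraph α) : ℕ :=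
  sInf {n | ∃ S : Set α, isLDSet G S ∧ S.ncard = n}

/-- The global location-domination number `λ_g(G)`. -/
noncomputable def gldNum {α : Type*} (G : SimpleGraph α) : ℕ :=
  sInf {n | ∃ S : Set α, isLDSet G S ∧ isLDSet Gᶜ S ∧ S.ncard = n}

/-- `G` is bipartite with stable sets `U` and `W`. -/
def bipartiteWith {α : Type*} (G : SimpleGraph α) (U W : Set α) : Prop :=
  U ∪ W = Set.univ ∧ Disjoint U W ∧
    ∀ ⦃u v : α⦄, G.Adj u v → (u ∈ U ∧ v ∈ W) ∨ (u ∈ W ∧ v ∈ U)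

namespace Finset

variable {α : Type*} [DecidableEq α] {𝒜 : Finset (Finset α)} {s t : Finset α} {u : α}

/-- Lower endpoints of the edges in direction `u` of the subgraph of the hypercube induced
on `𝒜`. -/
def cubeEdges (u : α) (𝒜 : Finset (Finset α)) : Finset (Finset α) :=
  {s ∈ 𝒜 | u ∉ s ∧ insert u s ∈ 𝒜}

lemma mem_cubeEdges : s ∈ cubeEdges u 𝒜 ↔ s ∈ 𝒜 ∧ u ∉ s ∧ insert u s ∈ 𝒜 := mem_filter

lemma mem_cubeEdges_of_erase_eq (hs : s ∈ 𝒜) (ht : t ∈ 𝒜) (hne : s ≠ t)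
    (h : s.erase u = t.erase u) :
    (s ∈ cubeEdges u 𝒜 ∧ insert u s = t) ∨ (t ∈ cubeEdges u 𝒜 ∧ insert u t = s) := by
  by_cases hus : u ∈ s <;> by_cases hut : u ∈ t
  · exact absurd (by rw [← insert_erase hus, h, insert_erase hut]) hne
  · have hts : insert u t = s := by rw [← erase_eq_of_notMem hut, ← h, insert_erase hus]
    exact Or.inr ⟨mem_cubeEdges.2 ⟨ht, hut, hts ▸ hs⟩, hts⟩
  · have hst : insert u s = t := by rw [← erase_eq_of_notMem hus, h, insert_erase hut]
    exact Or.inl ⟨mem_cubeEdges.2 ⟨hs, hus, hst ▸ ht⟩, hst⟩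
  · exact absurd (by rw [← erase_eq_of_notMem hus, h, erase_eq_of_notMem hut]) hne

lemma two_le_card_cubeEdges (hmem : ∃ s ∈ 𝒜, u ∈ s)
    (h : ∀ s ∈ 𝒜, u ∈ s → ∃ t ∈ cubeEdges u 𝒜, insert u t ≠ s) :
    2 ≤ #(cubeEdges u 𝒜) := by
  obtain ⟨s, hs, hus⟩ := hmem
  obtain ⟨t, ht, hts⟩ := h s hs hus
  obtain ⟨t', ht', ht't⟩ := h _ (mem_cubeEdges.1 ht).2.2 (mem_insert_self u t)
  exact one_lt_card.2 ⟨t, ht, t', ht', fun htt' => ht't (htt' ▸ rfl)⟩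

end Finset

namespace Down

open Finset FinsetFamily

variable {α : Type*} [DecidableEq α] {𝒜 : Finset (Finset α)} {s : Finset α} {a u : α}

lemma erase_mem_cubeEdges_compression (hs : s ∈ cubeEdges u 𝒜) :
    s.erase a ∈ cubeEdges u (𝓓 a 𝒜) := by
  obtain ⟨hs, hus, hins⟩ := mem_cubeEdges.1 hs
  refine mem_cubeEdges.2 ⟨erase_mem_compression hs, fun h => hus (mem_of_mem_erase h), ?_⟩
  obtain rfl | hua := eq_or_ne u a
  · rw [erase_eq_of_notMem hus]
    exact mem_compression.2 (Or.inl ⟨hins, by rwa [erase_insert hus]⟩)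
  · rw [← erase_insert_of_ne hua]
    exact erase_mem_compression hins

lemma mem_cubeEdges_compression (hs : s ∈ cubeEdges u 𝒜) (ha : a ∈ s)
    (hsa : s.erase a ∈ cubeEdges u 𝒜) : s ∈ cubeEdges u (𝓓 a 𝒜) := by
  obtain ⟨hs, hus, hins⟩ := mem_cubeEdges.1 hs
  obtain ⟨hsa, -, hinsa⟩ := mem_cubeEdges.1 hsa
  have hua : u ≠ a := fun h => hus (h ▸ ha)
  refine mem_cubeEdges.2 ⟨mem_compression.2 (Or.inl ⟨hs, hsa⟩), hus, ?_⟩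
  exact mem_compression.2 (Or.inl ⟨hins, by rwa [erase_insert_of_ne hua]⟩)

/-- An edge that is not kept by the compression is replaced by its image under erasing `a`;
these images are pairwise distinct and distinct from the kept edges. -/
lemma card_cubeEdges_le_compression (u a : α) (𝒜 : Finset (Finset α)) :
    #(cubeEdges u 𝒜) ≤ #(cubeEdges u (𝓓 a 𝒜)) := by
  set f : Finset α → Finset α := fun s => if s ∈ cubeEdges u (𝓓 a 𝒜) then s else s.erase a
  have hmoved : ∀ s ∈ cubeEdges u 𝒜, s ∉ cubeEdges u (𝓓 a 𝒜) →
      a ∈ s ∧ s.erase a ∉ cubeEdges u 𝒜 := by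
    intro s hs hs'
    have ha : a ∈ s := by
      by_contra ha
      exact hs' (erase_eq_of_notMem ha ▸ erase_mem_cubeEdges_compression hs)
    exact ⟨ha, fun h => hs' (mem_cubeEdges_compression hs ha h)⟩
  refine card_le_card_of_injOn f (fun s hs => ?_) fun s hs t ht hst => ?_
  · simp only [f]
    split_ifs with h
    exacts [h, erase_mem_cubeEdges_compression hs]
  · simp only [f] at hst
    split_ifs at hst with h₁ h₂ h₂
    · exact hst
    · exact absurd (hst ▸ hs) (hmoved t ht h₂).2
    · exact absurd (hst ▸ ht) (hmoved s hs h₁).2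
    · exact erase_injOn' a (hmoved s hs h₁).1 (hmoved t ht h₂).1 hst

lemma compression_eq_image (a : α) (𝒜 : Finset (Finset α)) :
    𝓓 a 𝒜 = 𝒜.image fun s => if s.erase a ∈ 𝒜 then s else s.erase a := by
  ext t
  rw [mem_image, mem_compression]
  constructor
  · rintro (⟨ht, hta⟩ | ⟨ht, hat⟩)
    · exact ⟨t, ht, if_pos hta⟩
    · have ha : a ∉ t := fun ha => ht (by rwa [insert_eq_of_mem ha] at hat)
      exact ⟨insert a t, hat, by rw [erase_insert ha, if_neg ht]⟩
  · rintro ⟨s, hs, rfl⟩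
    split_ifs with h
    exacts [Or.inl ⟨hs, h⟩, mem_compression.1 (erase_mem_compression hs)]

lemma sum_card_compression_lt (hs : s ∈ 𝒜) (ha : a ∈ s) (hsa : s.erase a ∉ 𝒜) :
    ∑ t ∈ 𝓓 a 𝒜, #t < ∑ t ∈ 𝒜, #t := by
  set f : Finset α → Finset α := fun s => if s.erase a ∈ 𝒜 then s else s.erase a
  have hinj : Set.InjOn f 𝒜 :=
    card_image_iff.1 (by rw [← compression_eq_image, card_compression])
  rw [compression_eq_image, sum_image hinj]
  refine sum_lt_sum (fun t _ => ?_) ⟨s, hs, ?_⟩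
  · simp only [f]
    split_ifs
    exacts [le_rfl, card_erase_le]
  · simp only [f, if_neg hsa]
    exact card_erase_lt_of_mem ha

end Down

namespace Finset

variable {α : Type*} [DecidableEq α] {𝒜 : Finset (Finset α)} {U s t : Finset α}

lemma mem_of_subset_of_forall_erase_mem (h : ∀ t ∈ 𝒜, ∀ x, t.erase x ∈ 𝒜) (ht : t ∈ 𝒜)
    (hst : s ⊆ t) : s ∈ 𝒜 := by
  have hsdiff : ∀ r : Finset α, t \ r ∈ 𝒜 := by
    intro r
    induction r using Finset.induction_on with
    | empty => rwa [sdiff_empty]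
    | insert x r _ ih => rw [sdiff_insert]; exact h _ ih x
  simpa [sdiff_sdiff_right_self, inf_eq_inter, inter_eq_right.2 hst] using hsdiff (t \ s)

/-- Two edges in direction `u` put `{u}` and a pair containing `u` into the family. -/
lemma three_mul_card_add_two_le_of_forall_erase_mem (hempty : ∅ ∈ 𝒜)
    (hdown : ∀ t ∈ 𝒜, ∀ x, t.erase x ∈ 𝒜) (hU : ∀ u ∈ U, 2 ≤ #(cubeEdges u 𝒜)) :
    3 * #U + 2 ≤ 2 * #𝒜 := by
  have hpair : ∀ u ∈ U, {u} ∈ 𝒜 ∧ ∃ p ∈ 𝒜, #p = 2 ∧ u ∈ p := by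
    intro u hu
    obtain ⟨t, ht, htne⟩ := exists_mem_ne (hU u hu) ∅
    obtain ⟨-, hut, hins⟩ := mem_cubeEdges.1 ht
    obtain ⟨v, hv⟩ := nonempty_iff_ne_empty.2 htne
    have hsub : ∀ s ⊆ insert u t, s ∈ 𝒜 := fun _ => mem_of_subset_of_forall_erase_mem hdown hins
    refine ⟨hsub _ (by simp), {u, v}, hsub _ (insert_subset_insert _ (by simpa)), ?_, by simp⟩
    exact card_pair (ne_of_mem_of_not_mem hv hut).symm
  have h₁ : #U ≤ #(𝒜 # 1) :=
    card_le_card_of_injOn singleton (fun u hu => mem_slice.2 ⟨(hpair u hu).1, card_singleton u⟩)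
      singleton_injective.injOn
  have h₂ : #U ≤ 2 * #(𝒜 # 2) := by
    calc #U ≤ #((𝒜 # 2).biUnion id) := card_le_card fun u hu => by
          obtain ⟨p, hp, hpc, hup⟩ := (hpair u hu).2
          exact mem_biUnion.2 ⟨p, mem_slice.2 ⟨hp, hpc⟩, hup⟩
      _ ≤ #(𝒜 # 2) * 2 := card_biUnion_le_card_mul _ _ _ fun p hp => (mem_slice.1 hp).2.le
      _ = 2 * #(𝒜 # 2) := mul_comm _ _
  have h₀ : 1 ≤ #(𝒜 # 0) := card_pos.2 ⟨∅, mem_slice.2 ⟨hempty, card_empty⟩⟩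
  have hslices : ∑ r ∈ range 3, #(𝒜 # r) ≤ #𝒜 := by
    rw [← card_biUnion fun i _ j _ hij =>
      pairwiseDisjoint_slice (Set.mem_univ i) (Set.mem_univ j) hij]
    exact card_le_card (biUnion_subset.2 fun _ _ => slice_subset)
  simp only [sum_range_succ, range_zero, sum_empty] at hslices
  omega

/-- Compress until the family is closed under erasing elements: compressions keep its size and
lower the total size of its members. -/
theorem three_mul_card_add_two_le (hempty : ∅ ∈ 𝒜) (hU : ∀ u ∈ U, 2 ≤ #(cubeEdges u 𝒜)) :
    3 * #U + 2 ≤ 2 * #𝒜 := by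
  induction hN : ∑ s ∈ 𝒜, #s using Nat.strong_induction_on generalizing 𝒜 with
  | _ N ih =>
  by_cases hdown : ∀ t ∈ 𝒜, ∀ x, t.erase x ∈ 𝒜
  · exact three_mul_card_add_two_le_of_forall_erase_mem hempty hdown hU
  push Not at hdown
  obtain ⟨t, ht, x, hx⟩ := hdown
  have hxt : x ∈ t := by
    by_contra hxt
    exact hx (by rwa [erase_eq_of_notMem hxt])
  rw [← Down.card_compression x 𝒜]
  refine ih _ (hN ▸ Down.sum_card_compression_lt ht hxt hx) ?_
    (fun u hu => (hU u hu).trans (Down.card_cubeEdges_le_compression u x 𝒜)) rfl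
  exact Down.mem_compression.2 (Or.inl ⟨hempty, by rwa [erase_empty]⟩)

end Finset

section Graph

variable {V : Type*} {G : SimpleGraph V} {U W S : Set V} {u v w : V}

lemma bipartiteWith.symm (h : bipartiteWith G U W) : bipartiteWith G W U :=
  ⟨Set.union_comm U W ▸ h.1, h.2.1.symm, fun _ _ huv => (h.2.2 huv).symm⟩

lemma bipartiteWith.notMem_right (h : bipartiteWith G U W) (hu : u ∈ U) : u ∉ W :=
  Set.disjoint_left.1 h.2.1 hu

lemma bipartiteWith.mem_left_of_notMem_right (h : bipartiteWith G U W) (hu : u ∉ W) : u ∈ U :=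
  ((h.1 ▸ Set.mem_univ u : u ∈ U ∪ W)).resolve_right hu

lemma bipartiteWith.mem_right_of_adj (h : bipartiteWith G U W) (hu : u ∈ U) (huv : G.Adj u v) :
    v ∈ W :=
  (h.2.2 huv).elim And.right fun h' => absurd h'.1 (h.notMem_right hu)

lemma bipartiteWith.not_adj_of_mem_right (h : bipartiteWith G U W) (hv : v ∈ W) (hw : w ∈ W) :
    ¬ G.Adj v w :=
  fun hvw => h.notMem_right (h.symm.mem_right_of_adj hv hvw) hw

lemma bipartiteWith.eq_right_of_isDomSet (h : bipartiteWith G U W) (hS : isDomSet G S)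
    (hSW : S ⊆ W) : S = W := by
  refine hSW.antisymm fun w hw => ?_
  by_contra hwS
  obtain ⟨x, hxS, hwx⟩ := hS w hwS
  exact h.not_adj_of_mem_right hw (hSW hxS) hwx

lemma isLDSet_univ (G : SimpleGraph V) : isLDSet G Set.univ :=
  ⟨fun _ hv => absurd trivial hv, fun _ hu => absurd trivial hu⟩

lemma ldNum_le_ncard (hS : isLDSet G S) : ldNum G ≤ S.ncard :=
  Nat.sInf_le ⟨S, hS, rfl⟩

lemma exists_isLDSet_ncard_eq_ldNum (G : SimpleGraph V) :
    ∃ S, isLDSet G S ∧ S.ncard = ldNum G :=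
  Nat.sInf_mem (s := {n | ∃ S, isLDSet G S ∧ S.ncard = n}) ⟨_, Set.univ, isLDSet_univ G, rfl⟩

lemma compl_neighborSet_inter_of_notMem (hv : v ∉ S) :
    Gᶜ.neighborSet v ∩ S = S \ G.neighborSet v := by
  ext x
  simp only [Set.mem_inter_iff, Set.mem_sdiff, mem_neighborSet, compl_adj]
  exact ⟨fun h => ⟨h.2, h.1.2⟩, fun h => ⟨⟨fun hvx => hv (hvx ▸ h.1), h.2⟩, h.1⟩⟩

/-- Complementation turns the traces on `S` of the vertices outside `S` into their complements
in `S`, so only domination can fail in `Gᶜ`. -/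
lemma isLDSet.compl (hS : isLDSet G S) (h : ∀ v ∉ S, ∃ x ∈ S, ¬ G.Adj v x) : isLDSet Gᶜ S := by
  refine ⟨fun v hv => ?_, fun v hv v' hv' hne heq => hS.2 v hv v' hv' hne ?_⟩
  · obtain ⟨x, hx, hvx⟩ := h v hv
    exact ⟨x, hx, (compl_adj G v x).2 ⟨fun hvx => hv (hvx ▸ hx), hvx⟩⟩
  · rw [compl_neighborSet_inter_of_notMem hv, compl_neighborSet_inter_of_notMem hv'] at heq
    rw [Set.inter_comm, ← Set.sdiff_sdiff_right_self, heq, Set.sdiff_sdiff_right_self,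
      Set.inter_comm]

lemma eq_or_eq_of_ldNum_compl_eq (hbip : bipartiteWith G U W) (hlam : ldNum Gᶜ = ldNum G + 1)
    (hS : isLDSet G S) (hcard : S.ncard = ldNum G) : S = U ∨ S = W := by
  obtain ⟨v, hv, hvS⟩ : ∃ v ∉ S, ∀ x ∈ S, G.Adj v x := by
    by_contra! h
    have := ldNum_le_ncard (hS.compl h)
    omega
  by_cases hvW : v ∈ W
  · exact Or.inl <| hbip.symm.eq_right_of_isDomSet hS.1 fun x hx =>
      hbip.symm.mem_right_of_adj hvW (hvS x hx)
  · exact Or.inr <| hbip.eq_right_of_isDomSet hS.1 fun x hx =>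
      hbip.mem_right_of_adj (hbip.mem_left_of_notMem_right hvW) (hvS x hx)

lemma isLDSet_insert_diff_singleton (hbip : bipartiteWith G U W) (hu : u ∈ U)
    (huw : G.Adj u w) (hdom : ∀ v ∈ W, v ≠ w → ∃ x ∈ U, x ≠ u ∧ G.Adj v x)
    (hsep : ∀ v₁ ∈ W, ∀ v₂ ∈ W, v₁ ≠ w → v₂ ≠ w →
      G.neighborSet v₁ ∩ (U \ {u}) = G.neighborSet v₂ ∩ (U \ {u}) → v₁ = v₂) :
    isLDSet G (insert w (U \ {u})) := by
  have hw : w ∈ W := hbip.mem_right_of_adj hu huw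
  have hout : ∀ v ∉ insert w (U \ {u}), v = u ∨ (v ∈ W ∧ v ≠ w) := by
    intro v hv
    simp only [Set.mem_insert_iff, Set.mem_sdiff, Set.mem_singleton_iff, not_or, not_and,
      not_not] at hv
    by_cases hvU : v ∈ U
    · exact Or.inl (hv.2 hvU)
    · exact Or.inr ⟨hbip.symm.mem_left_of_notMem_right hvU, hv.1⟩
  have htrace : ∀ v ∈ W, G.neighborSet v ∩ insert w (U \ {u}) = G.neighborSet v ∩ (U \ {u}) :=
    fun v hv => Set.inter_insert_of_notMem (hbip.not_adj_of_mem_right hv hw)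
  have hsep_u : ∀ v ∈ W, G.neighborSet u ∩ insert w (U \ {u}) ≠
      G.neighborSet v ∩ insert w (U \ {u}) := fun v hv h => by
    have hwv : w ∈ G.neighborSet v ∩ insert w (U \ {u}) := h ▸ ⟨huw, Set.mem_insert w _⟩
    exact hbip.not_adj_of_mem_right hv hw hwv.1
  refine ⟨fun v hv => ?_, fun v₁ hv₁ v₂ hv₂ hne heq => ?_⟩
  · rcases hout v hv with rfl | ⟨hvW, hvw⟩
    · exact ⟨w, Set.mem_insert w _, huw⟩
    · obtain ⟨x, hx, hxu, hvx⟩ := hdom v hvW hvw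
      exact ⟨x, Or.inr ⟨hx, hxu⟩, hvx⟩
  · rcases hout v₁ hv₁ with rfl | ⟨hv₁W, hv₁w⟩ <;> rcases hout v₂ hv₂ with rfl | ⟨hv₂W, hv₂w⟩
    · exact hne rfl
    · exact hsep_u v₂ hv₂W heq
    · exact hsep_u v₁ hv₁W heq.symm
    · rw [htrace v₁ hv₁W, htrace v₂ hv₂W] at heq
      exact hne (hsep v₁ hv₁W v₂ hv₂W hv₁w hv₂w heq)

end Graph

section TraceFamily

open Finset

variable {V : Type*} [Fintype V] {G : SimpleGraph V} {U W : Set V} {u v w : V}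

open Classical in
noncomputable def neighborTrace (G : SimpleGraph V) (S : Set V) (v : V) : Finset V :=
  (G.neighborSet v ∩ S).toFinset

open Classical in
/-- `∅` is added so that a vertex of `W` with trace `{u}`, which `insert w (U \ {u})` does not
dominate, yields an edge in direction `u`. -/
noncomputable def traceFamily (G : SimpleGraph V) (U W : Set V) : Finset (Finset V) :=
  insert ∅ (W.toFinset.image (neighborTrace G U))

lemma mem_neighborTrace {S : Set V} {x : V} : x ∈ neighborTrace G S v ↔ G.Adj v x ∧ x ∈ S := by
  simp [neighborTrace]

lemma mem_traceFamily {s : Finset V} :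
    s ∈ traceFamily G U W ↔ s = ∅ ∨ ∃ w ∈ W, neighborTrace G U w = s := by
  classical
  simp [traceFamily]

lemma neighborTrace_mem_traceFamily (hw : w ∈ W) : neighborTrace G U w ∈ traceFamily G U W :=
  mem_traceFamily.2 (Or.inr ⟨w, hw, rfl⟩)

lemma neighborTrace_injOn (hbip : bipartiteWith G U W) (hU : isLDSet G U) :
    Set.InjOn (neighborTrace G U) W := by
  intro v hv v' hv' h
  by_contra hne
  refine hU.2 v (hbip.symm.notMem_right hv) v' (hbip.symm.notMem_right hv') hne ?_
  ext x
  simpa [mem_neighborTrace] using congrArg (x ∈ ·) h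

lemma neighborTrace_nonempty (hbip : bipartiteWith G U W) (hU : isLDSet G U) (hv : v ∈ W) :
    (neighborTrace G U v).Nonempty := by
  obtain ⟨x, hx, hvx⟩ := hU.1 v (hbip.symm.notMem_right hv)
  exact ⟨x, mem_neighborTrace.2 ⟨hvx, hx⟩⟩

lemma card_traceFamily (hbip : bipartiteWith G U W) (hU : isLDSet G U) :
    #(traceFamily G U W) = W.ncard + 1 := by
  classical
  rw [traceFamily, card_insert_of_notMem, card_image_of_injOn, Set.ncard_eq_toFinset_card']
  · simpa using neighborTrace_injOn hbip hU
  · simp only [mem_image, Set.mem_toFinset, not_exists, not_and]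
    exact fun w hw => (neighborTrace_nonempty hbip hU hw).ne_empty

lemma card_traceFamily_le : #(traceFamily G U W) ≤ 2 ^ U.ncard := by
  classical
  calc #(traceFamily G U W) ≤ #U.toFinset.powerset := card_le_card fun s hs => by
        rcases mem_traceFamily.1 hs with rfl | ⟨w, -, rfl⟩
        · exact empty_mem_powerset _
        · exact mem_powerset.2 fun x hx => Set.mem_toFinset.2 (mem_neighborTrace.1 hx).2
    _ = 2 ^ U.ncard := by rw [card_powerset, Set.ncard_eq_toFinset_card']

/-- Otherwise `insert w (U \ {u})` would be an LD-set of the same size as `U`, yet neither `U`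
nor `W`. -/
lemma exists_mem_cubeEdges_insert_ne [DecidableEq V] (hbip : bipartiteWith G U W)
    (hU : isLDSet G U) (hUcard : 1 < U.ncard)
    (hmin : ∀ T, isLDSet G T → T.ncard = U.ncard → T = U ∨ T = W) (hu : u ∈ U)
    (huw : G.Adj u w) :
    ∃ s ∈ cubeEdges u (traceFamily G U W), insert u s ≠ neighborTrace G U w := by
  have hw : w ∈ W := hbip.mem_right_of_adj hu huw
  have hinj := neighborTrace_injOn hbip hU
  by_contra! hno
  have hdom : ∀ v ∈ W, v ≠ w → ∃ x ∈ U, x ≠ u ∧ G.Adj v x := by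
    intro v hv hvw
    by_contra! h
    have hv_u : neighborTrace G U v = {u} := eq_singleton_iff_nonempty_unique_mem.2
      ⟨neighborTrace_nonempty hbip hU hv, fun x hx =>
        by_contra fun hxu => h x (mem_neighborTrace.1 hx).2 hxu (mem_neighborTrace.1 hx).1⟩
    have hedge : ∅ ∈ cubeEdges u (traceFamily G U W) := mem_cubeEdges.2
      ⟨mem_traceFamily.2 (Or.inl rfl), notMem_empty u, by
        simpa [← hv_u] using neighborTrace_mem_traceFamily hv⟩
    exact hvw (hinj hv hw (by rw [hv_u, ← hno ∅ hedge]; rfl))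
  have hsep : ∀ v₁ ∈ W, ∀ v₂ ∈ W, v₁ ≠ w → v₂ ≠ w →
      G.neighborSet v₁ ∩ (U \ {u}) = G.neighborSet v₂ ∩ (U \ {u}) → v₁ = v₂ := by
    intro v₁ hv₁ v₂ hv₂ hv₁w hv₂w h
    by_contra hne
    have herase : (neighborTrace G U v₁).erase u = (neighborTrace G U v₂).erase u := by
      ext x
      simpa [mem_neighborTrace, and_comm, and_left_comm] using congrArg (x ∈ ·) h
    rcases mem_cubeEdges_of_erase_eq (neighborTrace_mem_traceFamily hv₁)
      (neighborTrace_mem_traceFamily hv₂) (fun h => hne (hinj hv₁ hv₂ h)) herase with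
      ⟨hedge, hins⟩ | ⟨hedge, hins⟩
    · exact hv₂w (hinj hv₂ hw (hins ▸ hno _ hedge))
    · exact hv₁w (hinj hv₁ hw (hins ▸ hno _ hedge))
  have hT := isLDSet_insert_diff_singleton hbip hu huw hdom hsep
  have hTcard : (insert w (U \ {u})).ncard = U.ncard := by
    rw [Set.ncard_insert_of_notMem fun h => hbip.notMem_right h.1 hw,
      Set.ncard_sdiff_singleton_add_one hu]
  obtain ⟨u', hu', hu'u⟩ := Set.exists_ne_of_one_lt_ncard hUcard u
  rcases hmin _ hT hTcard with h | h
  · exact hbip.notMem_right (h ▸ Set.mem_insert w _) hw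
  · exact hbip.notMem_right hu' (h ▸ Or.inr ⟨hu', hu'u⟩)

theorem three_mul_ncard_le_two_mul_ncard (hbip : bipartiteWith G U W) (hconn : G.Connected)
    (hU : isLDSet G U) (hUcard : 1 < U.ncard)
    (hmin : ∀ T, isLDSet G T → T.ncard = U.ncard → T = U ∨ T = W) :
    3 * U.ncard ≤ 2 * W.ncard := by
  classical
  obtain ⟨u₁, hu₁, u₂, hu₂, hne⟩ := (Set.one_lt_ncard (Set.toFinite U)).1 hUcard
  have : Nontrivial V := ⟨u₁, u₂, hne⟩
  have hedges : ∀ u ∈ U.toFinset, 2 ≤ #(cubeEdges u (traceFamily G U W)) := by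
    intro u hu
    rw [Set.mem_toFinset] at hu
    obtain ⟨w, huw⟩ := hconn.preconnected.exists_adj_of_nontrivial u
    refine two_le_card_cubeEdges ⟨_, neighborTrace_mem_traceFamily
      (hbip.mem_right_of_adj hu huw), mem_neighborTrace.2 ⟨huw.symm, hu⟩⟩ fun s hs hus => ?_
    obtain ⟨w', -, rfl⟩ := (mem_traceFamily.1 hs).resolve_left (ne_empty_of_mem hus)
    exact exists_mem_cubeEdges_insert_ne hbip hU hUcard hmin hu (mem_neighborTrace.1 hus).1.symm
  have := three_mul_card_add_two_le (mem_traceFamily.2 (Or.inl rfl)) hedges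
  rw [card_traceFamily hbip hU, ← Set.ncard_eq_toFinset_card'] at this
  omega

end TraceFamily

theorem stmt16_general {V : Type*} [Fintype V] (G : SimpleGraph V) (U W : Set V) (r s : ℕ)
    (hconn : G.Connected) (hbip : bipartiteWith G U W)
    (hU : U.ncard = r) (hW : W.ncard = s)
    (hrs : r ≤ s) (hr : 3 ≤ r) (hlam : ldNum Gᶜ = ldNum G + 1) :
    3 * r ≤ 2 * s ∧ s ≤ 2 ^ r - 1 := by
  subst hU hW
  obtain ⟨S, hS, hScard⟩ := exists_isLDSet_ncard_eq_ldNum G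
  have hparts : ∀ T, isLDSet G T → T.ncard = S.ncard → T = U ∨ T = W :=
    fun T hT h => eq_or_eq_of_ldNum_compl_eq hbip hlam hT (h.trans hScard)
  rcases hparts S hS rfl with rfl | rfl
  · have h₁ := three_mul_ncard_le_two_mul_ncard hbip hconn hS (by omega) hparts
    have h₂ := card_traceFamily hbip hS
    have h₃ : (traceFamily G S W).card ≤ 2 ^ S.ncard := card_traceFamily_le
    omega
  · have := three_mul_ncard_le_two_mul_ncard hbip.symm hconn hS (by omega)
      fun T hT h => (hparts T hT h).symm
    omega

theorem stmt16 {V : Type*} [Fintype V] (G : SimpleGraph V) (U W : Set V) (r s : ℕ)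
    (hconn : G.Connected) (hbip : bipartiteWith G U W)
    (hU : U.ncard = r) (hW : W.ncard = s)
    (hrs : r ≤ s) (hn : 4 ≤ r + s)
    (hr : 3 ≤ r) (hlam : ldNum Gᶜ = ldNum G + 1) :
    3 * r ≤ 2 * s ∧ s ≤ 2 ^ r - 1 :=
  stmt16_general G U W r s hconn hbip hU hW hrs hr hlam
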